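/- arXiv:2412.16441 — 2 statements merged into one kernel-verified Lean document; each statement's English description precedes it below -/
import Mathlib

section
/- Ruhe's trace inequality: if X and Y are positive semidefinite Hermitian n×n matrices with eigenvalues x_1 ≥ ... ≥ x_n ≥ 0 and y_1 ≥ ... ≥ y_n ≥ 0, then ∑_{i=1}^n x_i y_{n−i+1} ≤ tr(XY) ≤ ∑_{i=1}^n x_i y_i. -/
open ComplexOrder



open Finset

lemma ruhe_expand {n : ℕ} (x : ℕ → ℝ) (hx0 : x n = 0) (i : ℕ) (hi : i < n) :
    x i = ∑ k ∈ range n, (if i ≤ k then x k - x (k+1) else 0) := by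
  have h1 : ∑ k ∈ range n, (if i ≤ k then x k - x (k+1) else 0)
      = ∑ k ∈ Finset.filter (fun k => i ≤ k) (range n), (x k - x (k+1)) := by
    rw [Finset.sum_filter]
  have h2 : Finset.filter (fun k => i ≤ k) (range n) = Finset.Ico i n := by
    ext k; simp [Finset.mem_filter, Finset.mem_Ico, and_comm]
  rw [h1, h2, Finset.sum_Ico_eq_sum_range]
  have h3 : ∀ k, x (i + k) - x (i + k + 1) = (fun m => x (i + m)) k - (fun m => x (i + m)) (k+1) := by
    intro k; simp [Nat.add_assoc]
  simp only [h3]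
  rw [Finset.sum_range_sub' (fun m => x (i + m))]
  simp only [add_zero]
  rw [Nat.add_sub_cancel' hi.le, hx0, sub_zero]

lemma ruhe_sum3_rot {s t u : Finset ℕ} (G : ℕ → ℕ → ℕ → ℝ) :
    ∑ a ∈ s, ∑ b ∈ t, ∑ c ∈ u, G a b c = ∑ b ∈ t, ∑ c ∈ u, ∑ a ∈ s, G a b c := by
  rw [Finset.sum_comm]
  exact Finset.sum_congr rfl fun b _ => Finset.sum_comm

lemma ruhe_filter_le {n k : ℕ} (h : k < n) :
    Finset.filter (fun i => i ≤ k) (range n) = range (k+1) := by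
  ext i; simp only [Finset.mem_filter, Finset.mem_range]; omega

lemma ruhe_sum4_comm {s t u v : Finset ℕ} (F : ℕ → ℕ → ℕ → ℕ → ℝ) :
    ∑ i ∈ s, ∑ j ∈ t, ∑ k ∈ u, ∑ l ∈ v, F i j k l
      = ∑ k ∈ u, ∑ l ∈ v, ∑ i ∈ s, ∑ j ∈ t, F i j k l := by
  calc ∑ i ∈ s, ∑ j ∈ t, ∑ k ∈ u, ∑ l ∈ v, F i j k l
      = ∑ i ∈ s, ∑ k ∈ u, ∑ l ∈ v, ∑ j ∈ t, F i j k l :=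
        Finset.sum_congr rfl fun i _ => ruhe_sum3_rot _
    _ = ∑ k ∈ u, ∑ i ∈ s, ∑ l ∈ v, ∑ j ∈ t, F i j k l := Finset.sum_comm
    _ = ∑ k ∈ u, ∑ l ∈ v, ∑ i ∈ s, ∑ j ∈ t, F i j k l :=
        Finset.sum_congr rfl fun k _ => Finset.sum_comm

lemma ruhe_core (n : ℕ) (p : ℕ → ℕ → ℝ) (x y : ℕ → ℝ)
    (hp : ∀ i j, 0 ≤ p i j)
    (hrow : ∀ i, i < n → ∑ j ∈ range n, p i j = 1)
    (hcol : ∀ j, j < n → ∑ i ∈ range n, p i j = 1)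
    (hxm : ∀ k, k < n → x (k+1) ≤ x k) (hym : ∀ k, k < n → y (k+1) ≤ y k)
    (hxn : x n = 0) (hyn : y n = 0) :
    (∑ i ∈ range n, x i * y (n - 1 - i) ≤ ∑ i ∈ range n, ∑ j ∈ range n, p i j * (x i * y j))
    ∧ (∑ i ∈ range n, ∑ j ∈ range n, p i j * (x i * y j) ≤ ∑ i ∈ range n, x i * y i) := by
  set δ : ℕ → ℝ := fun k => x k - x (k+1) with hδdef
  set ε : ℕ → ℝ := fun l => y l - y (l+1) with hεdef
  have hδ : ∀ k, k < n → 0 ≤ δ k := fun k hk => sub_nonneg.2 (hxm k hk)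
  have hε : ∀ l, l < n → 0 ≤ ε l := fun l hl => sub_nonneg.2 (hym l hl)
  set T : ℕ → ℕ → ℝ := fun k l => ∑ i ∈ range (k+1), ∑ j ∈ range (l+1), p i j with hTdef
  -- main identity for the p-weighted sum
  have hmain : ∑ i ∈ range n, ∑ j ∈ range n, p i j * (x i * y j)
      = ∑ k ∈ range n, ∑ l ∈ range n, δ k * ε l * T k l := by
    have step1 : ∑ i ∈ range n, ∑ j ∈ range n, p i j * (x i * y j)
        = ∑ i ∈ range n, ∑ j ∈ range n, ∑ k ∈ range n, ∑ l ∈ range n,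
            p i j * ((if i ≤ k then δ k else 0) * (if j ≤ l then ε l else 0)) := by
      refine Finset.sum_congr rfl fun i hi => Finset.sum_congr rfl fun j hj => ?_
      rw [ruhe_expand x hxn i (Finset.mem_range.1 hi), ruhe_expand y hyn j (Finset.mem_range.1 hj),
        Finset.sum_mul_sum, Finset.mul_sum]
      exact Finset.sum_congr rfl fun k _ => by rw [Finset.mul_sum]
    rw [step1, ruhe_sum4_comm]
    refine Finset.sum_congr rfl fun k hk => Finset.sum_congr rfl fun l hl => ?_
    have hk' := Finset.mem_range.1 hk
    have hl' := Finset.mem_range.1 hl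
    have hterm : ∀ i j : ℕ, p i j * ((if i ≤ k then δ k else 0) * (if j ≤ l then ε l else 0))
        = if i ≤ k then (if j ≤ l then δ k * ε l * p i j else 0) else 0 := by
      intro i j
      by_cases h1 : i ≤ k <;> by_cases h2 : j ≤ l <;> simp [h1, h2] <;> ring
    simp only [hterm]
    calc ∑ i ∈ range n, ∑ j ∈ range n,
          (if i ≤ k then (if j ≤ l then δ k * ε l * p i j else 0) else 0)
        = ∑ i ∈ Finset.filter (fun i => i ≤ k) (range n),
            ∑ j ∈ Finset.filter (fun j => j ≤ l) (range n), δ k * ε l * p i j := by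
          rw [Finset.sum_filter]
          refine Finset.sum_congr rfl fun i _ => ?_
          by_cases h : i ≤ k
          · simp only [if_pos h]; rw [Finset.sum_filter]
          · simp [h]
      _ = ∑ i ∈ range (k+1), ∑ j ∈ range (l+1), δ k * ε l * p i j := by
          rw [ruhe_filter_le hk', ruhe_filter_le hl']
      _ = δ k * ε l * T k l := by
          rw [hTdef]; simp only [Finset.mul_sum]
  -- pairing identity
  have hpair : ∀ g : ℕ → ℕ, (∀ i, i < n → g i < n) →
      ∑ i ∈ range n, x i * y (g i)
        = ∑ k ∈ range n, ∑ l ∈ range n, δ k * ε l *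
            ((Finset.filter (fun i => i ≤ k ∧ g i ≤ l) (range n)).card : ℝ) := by
    intro g hg
    have step1 : ∑ i ∈ range n, x i * y (g i)
        = ∑ i ∈ range n, ∑ k ∈ range n, ∑ l ∈ range n,
            (if i ≤ k then δ k else 0) * (if g i ≤ l then ε l else 0) := by
      refine Finset.sum_congr rfl fun i hi => ?_
      rw [ruhe_expand x hxn i (Finset.mem_range.1 hi),
        ruhe_expand y hyn (g i) (hg i (Finset.mem_range.1 hi)), Finset.sum_mul_sum]
    rw [step1, ruhe_sum3_rot]
    refine Finset.sum_congr rfl fun k hk => Finset.sum_congr rfl fun l hl => ?_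
    have hterm : ∀ i : ℕ, (if i ≤ k then δ k else 0) * (if g i ≤ l then ε l else 0)
        = if i ≤ k ∧ g i ≤ l then δ k * ε l else 0 := by
      intro i; by_cases h1 : i ≤ k <;> by_cases h2 : g i ≤ l <;> simp [h1, h2]
    simp only [hterm]
    rw [← Finset.sum_filter, Finset.sum_const, nsmul_eq_mul]; ring
  -- counting
  have hcount1 : ∀ k l : ℕ, k < n → l < n →
      (((Finset.filter (fun i => i ≤ k ∧ i ≤ l) (range n)).card : ℕ) : ℝ)
        = ((min k l : ℕ) : ℝ) + 1 := by
    intro k l hk hl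
    have he : Finset.filter (fun i => i ≤ k ∧ i ≤ l) (range n) = range (min k l + 1) := by
      ext i; simp only [Finset.mem_filter, Finset.mem_range]; omega
    rw [he, Finset.card_range]; push_cast; ring
  have hcount2 : ∀ k l : ℕ, k < n → l < n →
      (Finset.filter (fun i => i ≤ k ∧ n - 1 - i ≤ l) (range n)).card = k + 1 - (n - 1 - l) := by
    intro k l hk hl
    have he : Finset.filter (fun i => i ≤ k ∧ n - 1 - i ≤ l) (range n) = Finset.Icc (n - 1 - l) k := by
      ext i; simp only [Finset.mem_filter, Finset.mem_range, Finset.mem_Icc]; omega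
    rw [he, Nat.card_Icc]
  -- bounds on T
  have hT0 : ∀ k l, 0 ≤ T k l := fun k l =>
    Finset.sum_nonneg fun i _ => Finset.sum_nonneg fun j _ => hp i j
  have hTub1 : ∀ k l : ℕ, k < n → l < n → T k l ≤ (k : ℝ) + 1 := by
    intro k l hk hl
    calc T k l ≤ ∑ i ∈ range (k+1), (1 : ℝ) := by
          refine Finset.sum_le_sum fun i hi => ?_
          have hi' : i < n := by have := Finset.mem_range.1 hi; omega
          calc ∑ j ∈ range (l+1), p i j ≤ ∑ j ∈ range n, p i j :=
                Finset.sum_le_sum_of_subset_of_nonneg (Finset.range_subset_range.2 (by omega))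
                  (fun j _ _ => hp i j)
            _ = 1 := hrow i hi'
      _ = (k : ℝ) + 1 := by rw [Finset.sum_const, Finset.card_range, nsmul_eq_mul, mul_one]; push_cast; ring
  have hTub2 : ∀ k l : ℕ, k < n → l < n → T k l ≤ (l : ℝ) + 1 := by
    intro k l hk hl
    have hTc : T k l = ∑ j ∈ range (l+1), ∑ i ∈ range (k+1), p i j := Finset.sum_comm
    rw [hTc]
    calc ∑ j ∈ range (l+1), ∑ i ∈ range (k+1), p i j ≤ ∑ j ∈ range (l+1), (1 : ℝ) := by
          refine Finset.sum_le_sum fun j hj => ?_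
          have hj' : j < n := by have := Finset.mem_range.1 hj; omega
          calc ∑ i ∈ range (k+1), p i j ≤ ∑ i ∈ range n, p i j :=
                Finset.sum_le_sum_of_subset_of_nonneg (Finset.range_subset_range.2 (by omega))
                  (fun i _ _ => hp i j)
            _ = 1 := hcol j hj'
      _ = (l : ℝ) + 1 := by rw [Finset.sum_const, Finset.card_range, nsmul_eq_mul, mul_one]; push_cast; ring
  have hTlb : ∀ k l : ℕ, k < n → l < n → (k + 1 : ℝ) - ((n : ℝ) - ((l : ℝ) + 1)) ≤ T k l := by
    intro k l hk hl
    have hsplit : ∀ i, i < n → ∑ j ∈ range (l+1), p i j = 1 - ∑ j ∈ Finset.Ico (l+1) n, p i j := by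
      intro i hi
      have h : ∑ j ∈ range (l+1), p i j + ∑ j ∈ Finset.Ico (l+1) n, p i j = 1 := by
        rw [Finset.range_eq_Ico, Finset.sum_Ico_consecutive _ (Nat.zero_le _) (by omega : l + 1 ≤ n),
          ← Finset.range_eq_Ico]
        exact hrow i hi
      linarith
    have hbig : ∑ i ∈ range (k+1), ∑ j ∈ Finset.Ico (l+1) n, p i j ≤ (n : ℝ) - ((l : ℝ) + 1) := by
      have h1 : ∑ i ∈ range (k+1), ∑ j ∈ Finset.Ico (l+1) n, p i j
          ≤ ∑ i ∈ range n, ∑ j ∈ Finset.Ico (l+1) n, p i j :=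
        Finset.sum_le_sum_of_subset_of_nonneg (Finset.range_subset_range.2 (by omega))
          (fun i _ _ => Finset.sum_nonneg fun j _ => hp i j)
      have h2 : ∑ i ∈ range n, ∑ j ∈ Finset.Ico (l+1) n, p i j = (n : ℝ) - ((l : ℝ) + 1) := by
        rw [Finset.sum_comm]
        rw [Finset.sum_congr rfl (fun j hj => hcol j (Finset.mem_Ico.1 hj).2),
          Finset.sum_const, Nat.card_Ico, nsmul_eq_mul, mul_one, Nat.cast_sub (by omega)]
        push_cast; ring
      linarith
    have hTeq : T k l = ∑ i ∈ range (k+1), (1 - ∑ j ∈ Finset.Ico (l+1) n, p i j) := by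
      refine Finset.sum_congr rfl fun i hi => ?_
      exact hsplit i (by have := Finset.mem_range.1 hi; omega)
    rw [hTeq, Finset.sum_sub_distrib, Finset.sum_const, Finset.card_range, nsmul_eq_mul, mul_one]
    push_cast
    linarith
  constructor
  · -- lower bound
    have hrev := hpair (fun i => n - 1 - i) (fun i hi => show n - 1 - i < n by omega)
    rw [hmain, hrev]
    refine Finset.sum_le_sum fun k hk => Finset.sum_le_sum fun l hl => ?_
    have hk' := Finset.mem_range.1 hk
    have hl' := Finset.mem_range.1 hl
    refine mul_le_mul_of_nonneg_left ?_ (mul_nonneg (hδ k hk') (hε l hl'))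
    rw [hcount2 k l hk' hl']
    by_cases hc : n - 1 - l ≤ k + 1
    · have h1 : ((k + 1 - (n - 1 - l) : ℕ) : ℝ) = (k + 1 : ℝ) - ((n - 1 - l : ℕ) : ℝ) := by
        rw [Nat.cast_sub hc]; push_cast; ring
      have h2 : ((n - 1 - l : ℕ) : ℝ) = (n : ℝ) - ((l : ℝ) + 1) := by
        rw [(by omega : n - 1 - l = n - (l + 1)), Nat.cast_sub (by omega)]; push_cast; ring
      rw [h1, h2]
      exact hTlb k l hk' hl'
    · have h0 : k + 1 - (n - 1 - l) = 0 := by omega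
      rw [h0]
      simpa using hT0 k l
  · -- upper bound
    have hid := hpair (fun i => i) (fun i hi => hi)
    rw [hmain, hid]
    refine Finset.sum_le_sum fun k hk => Finset.sum_le_sum fun l hl => ?_
    have hk' := Finset.mem_range.1 hk
    have hl' := Finset.mem_range.1 hl
    refine mul_le_mul_of_nonneg_left ?_ (mul_nonneg (hδ k hk') (hε l hl'))
    rw [hcount1 k l hk' hl']
    rcases le_total k l with h | h
    · rw [min_eq_left h]; exact hTub1 k l hk' hl'
    · rw [min_eq_right h]; exact hTub2 k l hk' hl'


lemma ruhe_trace_eq {n : ℕ} (X Y : Matrix (Fin n) (Fin n) ℂ)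
    (hX : X.IsHermitian) (hY : Y.IsHermitian) :
    ((X * Y).trace).re = ∑ i : Fin n, ∑ j : Fin n,
      hX.eigenvalues i * hY.eigenvalues j *
        Complex.normSq ((star (hX.eigenvectorUnitary : Matrix (Fin n) (Fin n) ℂ) *
          (hY.eigenvectorUnitary : Matrix (Fin n) (Fin n) ℂ)) i j) := by
  set U := (hX.eigenvectorUnitary : Matrix (Fin n) (Fin n) ℂ) with hU
  set V := (hY.eigenvectorUnitary : Matrix (Fin n) (Fin n) ℂ) with hV
  set Dx : Matrix (Fin n) (Fin n) ℂ := Matrix.diagonal (RCLike.ofReal ∘ hX.eigenvalues) with hDx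
  set Dy : Matrix (Fin n) (Fin n) ℂ := Matrix.diagonal (RCLike.ofReal ∘ hY.eigenvalues) with hDy
  set W := star U * V with hW
  have h1 : (X * Y).trace = (Dx * W * Dy * (star V * U)).trace := by
    conv_lhs => rw [hX.spectral_theorem, hY.spectral_theorem, Unitary.conjStarAlgAut_apply,
      Unitary.conjStarAlgAut_apply]
    rw [show U * Dx * star U * (V * Dy * star V)
        = U * (Dx * (star U * V) * Dy * star V) by simp only [Matrix.mul_assoc],
      Matrix.trace_mul_comm]
    simp only [hW, Matrix.mul_assoc]
  have hstarW : star V * U = star W := by rw [hW]; simp [Matrix.mul_assoc]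
  have h2 : (Dx * W * Dy * star W).trace
      = ∑ i : Fin n, ∑ j : Fin n,
          ((hX.eigenvalues i * hY.eigenvalues j * Complex.normSq (W i j) : ℝ) : ℂ) := by
    rw [Matrix.trace]
    refine Finset.sum_congr rfl fun i _ => ?_
    rw [Matrix.diag_apply, Matrix.mul_apply]
    refine Finset.sum_congr rfl fun j _ => ?_
    rw [Matrix.mul_diagonal, Matrix.diagonal_mul, Matrix.star_apply]
    simp only [Function.comp_apply, RCLike.ofReal_alg]
    rw [Complex.star_def]
    calc ((hX.eigenvalues i • (1:ℂ)) * W i j * (hY.eigenvalues j • (1:ℂ))) * (starRingEnd ℂ) (W i j)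
        = (hX.eigenvalues i • (1:ℂ)) * (hY.eigenvalues j • (1:ℂ)) * (W i j * (starRingEnd ℂ) (W i j)) := by ring
      _ = ((hX.eigenvalues i * hY.eigenvalues j * Complex.normSq (W i j) : ℝ) : ℂ) := by
          rw [Complex.mul_conj]; push_cast; simp [Complex.real_smul]
  rw [h1, hstarW, h2, Complex.re_sum]
  refine Finset.sum_congr rfl fun i _ => ?_
  rw [Complex.re_sum]
  exact Finset.sum_congr rfl fun j _ => Complex.ofReal_re _


lemma ruhe_row_sum {n : ℕ} (Wu : Matrix.unitaryGroup (Fin n) ℂ) (i : Fin n) :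
    ∑ j : Fin n, Complex.normSq ((Wu : Matrix (Fin n) (Fin n) ℂ) i j) = 1 := by
  set W := (Wu : Matrix (Fin n) (Fin n) ℂ) with hW
  have h : W * star W = 1 := Matrix.mem_unitaryGroup_iff.1 Wu.2
  have h2 : ∑ j, W i j * star (W i j) = 1 := by
    have := congrFun (congrFun h i) i
    rwa [Matrix.mul_apply, Matrix.one_apply_eq,
      Finset.sum_congr rfl (fun j _ => by rw [Matrix.star_apply])] at this
  have h3 := congrArg Complex.re h2
  rwa [Complex.re_sum, Finset.sum_congr rfl (fun j _ => by
    rw [Complex.star_def, Complex.mul_conj, Complex.ofReal_re]), Complex.one_re] at h3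

lemma ruhe_col_sum {n : ℕ} (Wu : Matrix.unitaryGroup (Fin n) ℂ) (j : Fin n) :
    ∑ i : Fin n, Complex.normSq ((Wu : Matrix (Fin n) (Fin n) ℂ) i j) = 1 := by
  set W := (Wu : Matrix (Fin n) (Fin n) ℂ) with hW
  have h : star W * W = 1 := Matrix.mem_unitaryGroup_iff'.1 Wu.2
  have h2 : ∑ i, star (W i j) * W i j = 1 := by
    have := congrFun (congrFun h j) j
    rwa [Matrix.mul_apply, Matrix.one_apply_eq,
      Finset.sum_congr rfl (fun i _ => by rw [Matrix.star_apply])] at this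
  have h3 := congrArg Complex.re h2
  rwa [Complex.re_sum, Finset.sum_congr rfl (fun i _ => by
    rw [Complex.star_def, mul_comm, Complex.mul_conj, Complex.ofReal_re]), Complex.one_re] at h3

/-- Ruhe's trace inequality for PSD Hermitian matrices with eigenvalues listed
in nonincreasing order. -/
theorem ruhe_trace_inequality
    {n : ℕ} (X Y : Matrix (Fin n) (Fin n) ℂ)
    (hX : X.PosSemidef) (hY : Y.PosSemidef)
    (x y : Fin n → ℝ) (σ τ : Equiv.Perm (Fin n))
    (hx : x = hX.1.eigenvalues ∘ σ) (hy : y = hY.1.eigenvalues ∘ τ)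
    (hxa : Antitone x) (hya : Antitone y) :
    (∑ i : Fin n, x i * y i.rev) ≤ ((X * Y).trace).re ∧
      ((X * Y).trace).re ≤ ∑ i : Fin n, x i * y i := by
  have hxnn : ∀ i, 0 ≤ x i := by
    intro i; rw [hx]; exact hX.eigenvalues_nonneg (σ i)
  have hynn : ∀ i, 0 ≤ y i := by
    intro i; rw [hy]; exact hY.eigenvalues_nonneg (τ i)
  set Wu : Matrix.unitaryGroup (Fin n) ℂ :=
    star hX.1.eigenvectorUnitary * hY.1.eigenvectorUnitary with hWu
  set W := (Wu : Matrix (Fin n) (Fin n) ℂ) with hWdef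
  have hWeq : W = star (hX.1.eigenvectorUnitary : Matrix (Fin n) (Fin n) ℂ) *
      (hY.1.eigenvectorUnitary : Matrix (Fin n) (Fin n) ℂ) := by
    rw [hWdef, hWu]; simp
  set xe : ℕ → ℝ := fun a => if h : a < n then x ⟨a, h⟩ else 0 with hxe
  set ye : ℕ → ℝ := fun a => if h : a < n then y ⟨a, h⟩ else 0 with hye
  set pn : ℕ → ℕ → ℝ := fun a b =>
    if h : a < n ∧ b < n then Complex.normSq (W (σ ⟨a, h.1⟩) (τ ⟨b, h.2⟩)) else 0 with hpn
  have hp : ∀ a b, 0 ≤ pn a b := by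
    intro a b; rw [hpn]; dsimp only; split
    · exact Complex.normSq_nonneg _
    · exact le_refl 0
  have hrow : ∀ a, a < n → ∑ b ∈ Finset.range n, pn a b = 1 := by
    intro a ha
    rw [← Fin.sum_univ_eq_sum_range (fun b => pn a b) n]
    show ∑ j : Fin n, pn a ↑j = 1
    have e1 : ∑ j : Fin n, pn a ↑j = ∑ j : Fin n, Complex.normSq (W (σ ⟨a, ha⟩) (τ j)) :=
      Finset.sum_congr rfl fun j _ => by
        simp only [hpn]; rw [dif_pos ⟨ha, j.isLt⟩]
    rw [e1, Equiv.sum_comp τ (fun j => Complex.normSq (W (σ ⟨a, ha⟩) j))]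
    exact ruhe_row_sum Wu _
  have hcol : ∀ b, b < n → ∑ a ∈ Finset.range n, pn a b = 1 := by
    intro b hb
    rw [← Fin.sum_univ_eq_sum_range (fun a => pn a b) n]
    show ∑ i : Fin n, pn ↑i b = 1
    have e1 : ∑ i : Fin n, pn ↑i b = ∑ i : Fin n, Complex.normSq (W (σ i) (τ ⟨b, hb⟩)) :=
      Finset.sum_congr rfl fun i _ => by
        simp only [hpn]; rw [dif_pos ⟨i.isLt, hb⟩]
    rw [e1, Equiv.sum_comp σ (fun i => Complex.normSq (W i (τ ⟨b, hb⟩)))]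
    exact ruhe_col_sum Wu _
  have hxm : ∀ k, k < n → xe (k+1) ≤ xe k := by
    intro k hk; rw [hxe]; dsimp only; rw [dif_pos hk]
    by_cases h : k + 1 < n
    · rw [dif_pos h]
      exact hxa (show (⟨k, hk⟩ : Fin n) ≤ ⟨k+1, h⟩ from by
        simp only [Fin.mk_le_mk]; omega)
    · rw [dif_neg h]; exact hxnn _
  have hym : ∀ k, k < n → ye (k+1) ≤ ye k := by
    intro k hk; rw [hye]; dsimp only; rw [dif_pos hk]
    by_cases h : k + 1 < n
    · rw [dif_pos h]
      exact hya (show (⟨k, hk⟩ : Fin n) ≤ ⟨k+1, h⟩ from by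
        simp only [Fin.mk_le_mk]; omega)
    · rw [dif_neg h]; exact hynn _
  have hxn0 : xe n = 0 := by rw [hxe]; exact dif_neg (lt_irrefl n)
  have hyn0 : ye n = 0 := by rw [hye]; exact dif_neg (lt_irrefl n)
  obtain ⟨hlow, hup⟩ := ruhe_core n pn xe ye hp hrow hcol hxm hym hxn0 hyn0
  have htr : ((X * Y).trace).re
      = ∑ a ∈ Finset.range n, ∑ b ∈ Finset.range n, pn a b * (xe a * ye b) := by
    have eτ : ∀ a : Fin n,
        ∑ j : Fin n, hX.1.eigenvalues a * hY.1.eigenvalues (τ j) * Complex.normSq (W a (τ j))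
          = ∑ j : Fin n, hX.1.eigenvalues a * hY.1.eigenvalues j * Complex.normSq (W a j) :=
      fun a => Equiv.sum_comp τ (fun j => hX.1.eigenvalues a * hY.1.eigenvalues j
        * Complex.normSq (W a j))
    calc ((X * Y).trace).re
        = ∑ i : Fin n, ∑ j : Fin n,
            hX.1.eigenvalues i * hY.1.eigenvalues j * Complex.normSq (W i j) := by
          rw [ruhe_trace_eq X Y hX.1 hY.1, ← hWeq]
      _ = ∑ i : Fin n, ∑ j : Fin n, hX.1.eigenvalues (σ i) * hY.1.eigenvalues (τ j)
            * Complex.normSq (W (σ i) (τ j)) :=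
          ((Equiv.sum_comp σ (fun a => ∑ j : Fin n, hX.1.eigenvalues a * hY.1.eigenvalues (τ j)
              * Complex.normSq (W a (τ j)))).trans
            (Finset.sum_congr rfl fun a _ => eτ a)).symm
      _ = ∑ i : Fin n, ∑ j : Fin n, x i * y j * Complex.normSq (W (σ i) (τ j)) := by
          simp only [hx, hy, Function.comp_apply]
      _ = ∑ a ∈ Finset.range n, ∑ b ∈ Finset.range n, pn a b * (xe a * ye b) := by
          rw [← Fin.sum_univ_eq_sum_range
            (fun a => ∑ b ∈ Finset.range n, pn a b * (xe a * ye b)) n]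
          refine Finset.sum_congr rfl fun i _ => ?_
          rw [← Fin.sum_univ_eq_sum_range (fun b => pn ↑i b * (xe ↑i * ye b)) n]
          refine Finset.sum_congr rfl fun j _ => ?_
          rw [hpn, hxe, hye]; dsimp only
          rw [dif_pos (⟨i.isLt, j.isLt⟩ : (↑i < n) ∧ (↑j < n)), dif_pos i.isLt, dif_pos j.isLt]
          simp only [Fin.eta]; ring
  have hB : ∑ a ∈ Finset.range n, xe a * ye a = ∑ i : Fin n, x i * y i := by
    rw [← Fin.sum_univ_eq_sum_range (fun a => xe a * ye a) n]
    refine Finset.sum_congr rfl fun i _ => ?_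
    rw [hxe, hye]; dsimp only
    rw [dif_pos i.isLt, dif_pos i.isLt]
  have hC : ∑ a ∈ Finset.range n, xe a * ye (n - 1 - a) = ∑ i : Fin n, x i * y i.rev := by
    rw [← Fin.sum_univ_eq_sum_range (fun a => xe a * ye (n - 1 - a)) n]
    refine Finset.sum_congr rfl fun i _ => ?_
    have h1 : n - 1 - ↑i < n := by have := i.isLt; omega
    rw [hxe, hye]; dsimp only
    have h2 : (⟨n - 1 - ↑i, h1⟩ : Fin n) = i.rev :=
      Fin.ext (by
        rw [Fin.val_rev]
        show n - 1 - ↑i = n - (↑i + 1)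
        omega)
    rw [dif_pos i.isLt, dif_pos h1, h2]
  exact ⟨by rw [htr, ← hC]; exact hlow, by rw [htr, ← hB]; exact hup⟩
end

section
/- Contraction step of Rademacher complexity: if κ : ℝ → ℝ is C_κ-Lipschitz and F is a class of functions f : X → ℝ, then for any fixed points x_1,...,x_n, E_ε[sup_{f∈F} (1/n) ∑_i ε_i κ(f(x_i))] ≤ C_κ · E_ε[sup_{f∈F} (1/n) ∑_i ε_i f(x_i)], where ε_i are independent uniform ±1 signs and the suprema are assumed finite (e.g. F finite). -/
open Finset

private lemma rad_two_point {α : Type*} (F : Finset α) (hF : F.Nonempty)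
    (A p q : α → ℝ)
    (hd : ∀ f ∈ F, ∀ g ∈ F, |p f - p g| ≤ |q f - q g|) :
    F.sup' hF (fun f => A f + p f) + F.sup' hF (fun f => A f - p f) ≤
    F.sup' hF (fun f => A f + q f) + F.sup' hF (fun f => A f - q f) := by
  obtain ⟨f, hf, hfe⟩ := F.exists_mem_eq_sup' hF (fun f => A f + p f)
  obtain ⟨g, hg, hge⟩ := F.exists_mem_eq_sup' hF (fun f => A f - p f)
  rw [hfe, hge]
  have habs := hd f hf g hg
  have h1 : p f - p g ≤ |q f - q g| := (le_abs_self _).trans habs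
  rcases le_total (q g) (q f) with h | h
  · have h2 : |q f - q g| = q f - q g := abs_of_nonneg (by linarith)
    have e1 : (fun f => A f + q f) f ≤ F.sup' hF (fun f => A f + q f) :=
      Finset.le_sup' (fun f => A f + q f) hf
    have e2 : (fun f => A f - q f) g ≤ F.sup' hF (fun f => A f - q f) :=
      Finset.le_sup' (fun f => A f - q f) hg
    simp only at e1 e2
    linarith
  · have h2 : |q f - q g| = q g - q f := by
      rw [abs_sub_comm]; exact abs_of_nonneg (by linarith)
    have e1 : (fun f => A f + q f) g ≤ F.sup' hF (fun f => A f + q f) :=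
      Finset.le_sup' (fun f => A f + q f) hg
    have e2 : (fun f => A f - q f) f ≤ F.sup' hF (fun f => A f - q f) :=
      Finset.le_sup' (fun f => A f - q f) hf
    simp only at e1 e2
    linarith

private lemma rad_step {α : Type*} {n : ℕ} (F : Finset α) (hF : F.Nonempty)
    (H K : Fin n → α → ℝ) (j : Fin n)
    (hoff : ∀ i, i ≠ j → H i = K i)
    (hd : ∀ f ∈ F, ∀ g ∈ F, |H j f - H j g| ≤ |K j f - K j g|) :
    ∑ s : Fin n → Bool,
        F.sup' hF (fun f => ∑ i, (if s i then (1:ℝ) else -1) * H i f) ≤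
    ∑ s : Fin n → Bool,
        F.sup' hF (fun f => ∑ i, (if s i then (1:ℝ) else -1) * K i f) := by
  set SH : (Fin n → Bool) → ℝ :=
    fun s => F.sup' hF (fun f => ∑ i, (if s i then (1:ℝ) else -1) * H i f) with hSH
  set SK : (Fin n → Bool) → ℝ :=
    fun s => F.sup' hF (fun f => ∑ i, (if s i then (1:ℝ) else -1) * K i f) with hSK
  -- the flip involution
  set flip : (Fin n → Bool) → (Fin n → Bool) :=
    fun s => Function.update s j (!(s j)) with hflip
  have flip_inv : Function.Involutive flip := by
    intro s
    funext i
    by_cases hi : i = j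
    · subst hi; simp [hflip, Function.update]
    · simp [hflip, Function.update, hi]
  have flip_sum : ∀ (φ : (Fin n → Bool) → ℝ),
      ∑ s, φ (flip s) = ∑ s, φ s := by
    intro φ
    exact Fintype.sum_bijective flip flip_inv.bijective _ _ (fun s => rfl)
  -- pairing identity: for any φ, φ(update s j true) + φ(update s j false) = φ s + φ (flip s)
  have pair_eq : ∀ (φ : (Fin n → Bool) → ℝ) (s : Fin n → Bool),
      φ (Function.update s j true) + φ (Function.update s j false)
        = φ s + φ (flip s) := by
    intro φ s
    cases hsj : s j
    · have h1 : Function.update s j false = s := by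
        funext i; by_cases hi : i = j
        · subst hi; simp [Function.update, hsj]
        · simp [Function.update, hi]
      have h2 : Function.update s j true = flip s := by
        simp [hflip, hsj]
      rw [h1, h2]; ring
    · have h1 : Function.update s j true = s := by
        funext i; by_cases hi : i = j
        · subst hi; simp [Function.update, hsj]
        · simp [Function.update, hi]
      have h2 : Function.update s j false = flip s := by
        simp [hflip, hsj]
      rw [h1, h2]
  have doubling : ∀ (φ : (Fin n → Bool) → ℝ),
      ∑ s, (φ (Function.update s j true) + φ (Function.update s j false))
        = 2 * ∑ s, φ s := by
    intro φ
    calc ∑ s, (φ (Function.update s j true) + φ (Function.update s j false))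
        = ∑ s, (φ s + φ (flip s)) := by
          exact Finset.sum_congr rfl (fun s _ => pair_eq φ s)
      _ = ∑ s, φ s + ∑ s, φ (flip s) := Finset.sum_add_distrib
      _ = 2 * ∑ s, φ s := by rw [flip_sum]; ring
  -- pointwise comparison of paired terms
  have key : ∀ s : Fin n → Bool,
      SH (Function.update s j true) + SH (Function.update s j false) ≤
      SK (Function.update s j true) + SK (Function.update s j false) := by
    intro s
    have hsum : ∀ (G : Fin n → α → ℝ) (b : Bool) (f : α),
        ∑ i, (if (Function.update s j b) i then (1:ℝ) else -1) * G i f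
          = (if b then (1:ℝ) else -1) * G j f
            + ∑ i ∈ Finset.univ.erase j, (if s i then (1:ℝ) else -1) * G i f := by
      intro G b f
      rw [← Finset.add_sum_erase Finset.univ _ (Finset.mem_univ j)]
      congr 1
      · simp [Function.update]
      · exact Finset.sum_congr rfl (fun i hi => by
          simp [Function.update, (Finset.mem_erase.mp hi).1])
    have hAeq : ∀ f, ∑ i ∈ Finset.univ.erase j, (if s i then (1:ℝ) else -1) * H i f
        = ∑ i ∈ Finset.univ.erase j, (if s i then (1:ℝ) else -1) * K i f := by
      intro f
      exact Finset.sum_congr rfl (fun i hi => by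
        rw [hoff i (Finset.mem_erase.mp hi).1])
    set A : α → ℝ :=
      fun f => ∑ i ∈ Finset.univ.erase j, (if s i then (1:ℝ) else -1) * K i f with hA
    have e1 : SH (Function.update s j true) = F.sup' hF (fun f => A f + H j f) := by
      apply Finset.sup'_congr _ rfl
      intro f _
      rw [hsum H true f, hAeq f]; simp [hA]; ring
    have e2 : SH (Function.update s j false) = F.sup' hF (fun f => A f - H j f) := by
      apply Finset.sup'_congr _ rfl
      intro f _
      rw [hsum H false f, hAeq f]; simp [hA]; ring
    have e3 : SK (Function.update s j true) = F.sup' hF (fun f => A f + K j f) := by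
      apply Finset.sup'_congr _ rfl
      intro f _
      rw [hsum K true f]; simp [hA]; ring
    have e4 : SK (Function.update s j false) = F.sup' hF (fun f => A f - K j f) := by
      apply Finset.sup'_congr _ rfl
      intro f _
      rw [hsum K false f]; simp [hA]; ring
    rw [e1, e2, e3, e4]
    exact rad_two_point F hF A (fun f => H j f) (fun f => K j f) hd
  have h2 : 2 * ∑ s, SH s ≤ 2 * ∑ s, SK s := by
    rw [← doubling SH, ← doubling SK]
    exact Finset.sum_le_sum (fun s _ => key s)
  linarith

private lemma rad_main {α : Type*} {n : ℕ} (F : Finset α) (hF : F.Nonempty)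
    (h k : Fin n → α → ℝ)
    (hd : ∀ i, ∀ f ∈ F, ∀ g ∈ F, |h i f - h i g| ≤ |k i f - k i g|) :
    ∑ s : Fin n → Bool,
        F.sup' hF (fun f => ∑ i, (if s i then (1:ℝ) else -1) * h i f) ≤
    ∑ s : Fin n → Bool,
        F.sup' hF (fun f => ∑ i, (if s i then (1:ℝ) else -1) * k i f) := by
  set mix : Finset (Fin n) → Fin n → α → ℝ :=
    fun S i => if i ∈ S then k i else h i with hmix
  have main : ∀ S : Finset (Fin n),
      ∑ s : Fin n → Bool,
          F.sup' hF (fun f => ∑ i, (if s i then (1:ℝ) else -1) * h i f) ≤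
      ∑ s : Fin n → Bool,
          F.sup' hF (fun f => ∑ i, (if s i then (1:ℝ) else -1) * mix S i f) := by
    intro S
    induction S using Finset.induction with
    | empty => simp [hmix]
    | insert j S hj ih =>
      refine ih.trans ?_
      apply rad_step F hF (mix S) (mix (insert j S)) j
      · intro i hi
        simp only [hmix, Finset.mem_insert]
        rcases em (i ∈ S) with h' | h' <;> simp [h', hi]
      · intro f hf g hg
        simp only [hmix, hj, if_neg, Finset.mem_insert_self, if_pos]
        simpa [hj] using hd j f hf g hg
  have := main Finset.univ
  simpa [hmix] using this

theorem rademacher_contraction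
    {X : Type*} (F : Finset (X → ℝ)) (hF : F.Nonempty)
    (Cκ : NNReal) (κ : ℝ → ℝ) (hκ : LipschitzWith Cκ κ) (hκ0 : κ 0 = 0)
    (n : ℕ) (x : Fin n → X) :
    ((2 : ℝ) ^ n)⁻¹ *
        ∑ s : Fin n → Bool,
          F.sup' hF (fun f =>
            (n : ℝ)⁻¹ * ∑ i, (if s i then (1 : ℝ) else -1) * κ (f (x i))) ≤
      (Cκ : ℝ) *
        (((2 : ℝ) ^ n)⁻¹ *
          ∑ s : Fin n → Bool,
            F.sup' hF (fun f =>
              (n : ℝ)⁻¹ * ∑ i, (if s i then (1 : ℝ) else -1) * f (x i))) := by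
  have hn : (0:ℝ) ≤ (n:ℝ)⁻¹ := by positivity
  have hC : (0:ℝ) ≤ (Cκ:ℝ) := Cκ.coe_nonneg
  set h : Fin n → (X → ℝ) → ℝ := fun i f => (n:ℝ)⁻¹ * κ (f (x i)) with hh
  set k : Fin n → (X → ℝ) → ℝ := fun i f => (n:ℝ)⁻¹ * ((Cκ:ℝ) * f (x i)) with hk
  have hd : ∀ i, ∀ f ∈ F, ∀ g ∈ F, |h i f - h i g| ≤ |k i f - k i g| := by
    intro i f _ g _
    simp only [hh, hk]
    rw [← mul_sub, ← mul_sub, abs_mul, abs_mul]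
    apply mul_le_mul_of_nonneg_left _ (abs_nonneg _)
    rw [← mul_sub, abs_mul, abs_of_nonneg hC]
    have := hκ.dist_le_mul (f (x i)) (g (x i))
    simpa [Real.dist_eq] using this
  have main := rad_main F hF h k hd
  -- rewrite LHS
  have eL : ∑ s : Fin n → Bool,
      F.sup' hF (fun f =>
        (n : ℝ)⁻¹ * ∑ i, (if s i then (1 : ℝ) else -1) * κ (f (x i)))
      = ∑ s : Fin n → Bool,
        F.sup' hF (fun f => ∑ i, (if s i then (1:ℝ) else -1) * h i f) := by
    refine Finset.sum_congr rfl (fun s _ => ?_)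
    refine Finset.sup'_congr hF rfl (fun f _ => ?_)
    rw [Finset.mul_sum]
    exact Finset.sum_congr rfl (fun i _ => by simp only [hh]; ring)
  -- rewrite RHS
  have eR : (Cκ : ℝ) * ∑ s : Fin n → Bool,
      F.sup' hF (fun f =>
        (n : ℝ)⁻¹ * ∑ i, (if s i then (1 : ℝ) else -1) * f (x i))
      = ∑ s : Fin n → Bool,
        F.sup' hF (fun f => ∑ i, (if s i then (1:ℝ) else -1) * k i f) := by
    rw [Finset.mul_sum]
    refine Finset.sum_congr rfl (fun s _ => ?_)
    have hmax : ∀ a b : ℝ, (Cκ:ℝ) * (a ⊔ b) = ((Cκ:ℝ) * a) ⊔ ((Cκ:ℝ) * b) := by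
      intro a b
      rcases le_total a b with hab | hab
      · rw [sup_eq_right.mpr hab,
          sup_eq_right.mpr (mul_le_mul_of_nonneg_left hab hC)]
      · rw [sup_eq_left.mpr hab,
          sup_eq_left.mpr (mul_le_mul_of_nonneg_left hab hC)]
    rw [Finset.comp_sup'_eq_sup'_comp hF (fun z => (Cκ:ℝ) * z) hmax]
    refine Finset.sup'_congr hF rfl (fun f _ => ?_)
    simp only [Function.comp]
    rw [Finset.mul_sum, Finset.mul_sum]
    exact Finset.sum_congr rfl (fun i _ => by simp only [hk]; ring)
  rw [eL, ← mul_assoc, mul_comm (Cκ:ℝ) (((2:ℝ)^n)⁻¹), mul_assoc, eR]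
  exact mul_le_mul_of_nonneg_left main (by positivity)
end
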